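/- Let S be a set of points in general position in the plane, and let a, b ∈ S be two vertices of the boundary of the convex hull of S such that one of the two open halfplanes bounded by the line through a and b contains exactly 2 points of S and the other open halfplane contains at least 1 point of S. Then there do not exist two plane Hamiltonian paths π1, π2 on S such that the set of edges shared by π1 and π2 is exactly the segment ab. -/

import Mathlib

/-!
Delete the edge `ab` from a plane Hamiltonian path through it. Each of the two remaining
subpaths stays in one open halfplane of the line `ab`: an edge crossing the line would meet it
inside the convex hull of `S`, hence (as `a` and `b` are hull vertices) on the segment `ab`,
against planarity. Both halfplanes contain points, so one subpath is made of exactly the two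
points `c, d` on the small side; thus `cd` is an edge of every such path, and two of them
cannot share `ab` alone.
-/

open Set
open scoped Classical

noncomputable section

/-- Points in the plane. -/
abbrev Pt : Type := ℝ × ℝ

/-- Orientation determinant of the triple `(a, b, p)`:
positive iff `p` lies strictly to the left of the directed line from `a` to `b`. -/
def det3 (a b p : Pt) : ℝ :=
  (b.1 - a.1) * (p.2 - a.2) - (b.2 - a.2) * (p.1 - a.1)

/-- A finite point set is in general position if no three of its points are collinear. -/
def GenPos (S : Finset Pt) : Prop :=
  ∀ p ∈ S, ∀ q ∈ S, ∀ r ∈ S,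
    p ≠ q → p ≠ r → q ≠ r → ¬ Collinear ℝ ({p, q, r} : Set Pt)

/-- The list of (directed) edges of a polygonal path given by its list of vertices. -/
def edgeList (l : List Pt) : List (Pt × Pt) := l.zip l.tail

/-- The segment `ab` is an edge of the path `l`, i.e. `a` and `b` are consecutive on `l`. -/
def IsEdgeOf (a b : Pt) (l : List Pt) : Prop :=
  (a, b) ∈ edgeList l ∨ (b, a) ∈ edgeList l

/-- `l` is a plane (crossing-free) Hamiltonian path on the point set `S`:
its vertices are exactly the points of `S`, each visited once, and any two distinct
edges intersect only in common endpoints. -/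
def PlanePath (S : Finset Pt) (l : List Pt) : Prop :=
  l.Nodup ∧ l.toFinset = S ∧
  ∀ e ∈ edgeList l, ∀ f ∈ edgeList l, e ≠ f →
    segment ℝ e.1 e.2 ∩ segment ℝ f.1 f.2 ⊆
      (({e.1, e.2} : Set Pt) ∩ ({f.1, f.2} : Set Pt))

/-- Two paths are edge-disjoint: no segment is an edge of both. -/
def EdgeDisjoint (l₁ l₂ : List Pt) : Prop :=
  ∀ x y : Pt, IsEdgeOf x y l₁ → ¬ IsEdgeOf x y l₂

/-- `p` is a vertex of the boundary of the convex hull of `S`. -/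
def HullVertex (S : Finset Pt) (p : Pt) : Prop :=
  p ∈ Set.extremePoints ℝ (convexHull ℝ (S : Set Pt))

/-- `ab` is an edge of the boundary of the convex hull of `S`, i.e. `a` and `b` are
consecutive hull vertices: all other points of `S` lie strictly on one side of line `ab`. -/
def IsHullEdge (S : Finset Pt) (a b : Pt) : Prop :=
  a ∈ S ∧ b ∈ S ∧ a ≠ b ∧
  ((∀ p ∈ S, p ≠ a → p ≠ b → 0 < det3 a b p) ∨
   (∀ p ∈ S, p ≠ a → p ≠ b → det3 a b p < 0))

/-- The segment `xy` is a bridge over the line through `a` and `b`: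
it crosses the line `ℓ(ab)` but not the segment `ab`. -/
def IsBridge (a b x y : Pt) : Prop :=
  det3 a b x * det3 a b y < 0 ∧ segment ℝ x y ∩ segment ℝ a b = ∅

/-- The set of common edges of the two paths is exactly the segment `ab`. -/
def SharesExactly (a b : Pt) (l₁ l₂ : List Pt) : Prop :=
  IsEdgeOf a b l₁ ∧ IsEdgeOf a b l₂ ∧
  ∀ x y : Pt, IsEdgeOf x y l₁ → IsEdgeOf x y l₂ → ({x, y} : Set Pt) = ({a, b} : Set Pt)

theorem List.forall_iff_of_isChain {α : Type*} {P : α → Prop} {l : List α}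
    (h : l.IsChain fun x y => (P x ↔ P y)) : ∀ x ∈ l, ∀ y ∈ l, (P x ↔ P y) := by
  have hp := (@List.isChain_iff_pairwise _ (fun x y => (P x ↔ P y)) _ ⟨Iff.trans⟩).mp h
  exact hp.forall_of_forall_of_flip (fun _ _ => Iff.rfl) (hp.imp Iff.symm)

theorem List.filter_append_eq_left_or_right {α : Type*} {P : α → Prop} [DecidablePred P]
    {L R : List α} (hL : ∀ x ∈ L, ∀ y ∈ L, (P x ↔ P y)) (hR : ∀ x ∈ R, ∀ y ∈ R, (P x ↔ P y))
    (hP : ∃ x ∈ L ++ R, P x) (hnP : ∃ x ∈ L ++ R, ¬ P x) :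
    (L ++ R).filter P = L ∨ (L ++ R).filter P = R := by
  obtain ⟨x, hx, hPx⟩ := hP
  obtain ⟨y, hy, hPy⟩ := hnP
  rw [List.mem_append] at hx hy
  rcases hx with hx | hx
  · have hy : y ∈ R := hy.resolve_left fun hy => hPy ((hL x hx y hy).mp hPx)
    left
    rw [List.filter_append, List.filter_eq_self.mpr, List.filter_eq_nil_iff.mpr, List.append_nil]
    · simpa using fun z hz hPz => hPy ((hR z hz y hy).mp hPz)
    · simpa using fun z hz => (hL x hx z hz).mp hPx
  · have hy : y ∈ L := hy.resolve_right fun hy => hPy ((hR x hx y hy).mp hPx)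
    right
    rw [List.filter_append, List.filter_eq_nil_iff.mpr, List.filter_eq_self.mpr, List.nil_append]
    · simpa using fun z hz => (hR x hx z hz).mp hPx
    · simpa using fun z hz hPz => hPy ((hL z hz y hy).mp hPz)

theorem mem_segment_of_collinear_of_mem_extremePoints {𝕜 E : Type*} [Field 𝕜] [LinearOrder 𝕜]
    [IsStrictOrderedRing 𝕜] [AddCommGroup E] [Module 𝕜 E] {A : Set E} {a b z : E} (hab : a ≠ b)
    (ha : a ∈ A.extremePoints 𝕜) (hb : b ∈ A.extremePoints 𝕜) (hz : z ∈ A)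
    (hcol : Collinear 𝕜 {a, b, z}) : z ∈ segment 𝕜 a b := by
  have ha' := (mem_extremePoints_iff_forall_segment.mp ha).2
  have hb' := (mem_extremePoints_iff_forall_segment.mp hb).2
  rcases hcol.wbtw_or_wbtw_or_wbtw with h | h | h
  · rcases hb' a ha.1 z hz (mem_segment_iff_wbtw.mpr h) with h | rfl
    · exact absurd h hab
    · exact right_mem_segment 𝕜 a z
  · exact segment_symm 𝕜 b a ▸ mem_segment_iff_wbtw.mpr h
  · rcases ha' z hz b hb.1 (mem_segment_iff_wbtw.mpr h) with rfl | h
    · exact left_mem_segment 𝕜 z b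
    · exact absurd h.symm hab

@[simp] theorem det3_self_left (a b : Pt) : det3 a b a = 0 := by unfold det3; ring

@[simp] theorem det3_self_right (a b : Pt) : det3 a b b = 0 := by unfold det3; ring

theorem det3_swap (a b p : Pt) : det3 b a p = -det3 a b p := by unfold det3; ring

theorem continuous_det3 (a b : Pt) : Continuous (det3 a b) := by unfold det3; fun_prop

theorem collinear_of_det3_eq_zero {a b p : Pt} (h : det3 a b p = 0) : Collinear ℝ {a, b, p} := by
  rcases eq_or_ne a b with rfl | hab
  · simpa using collinear_pair ℝ a p
  have hd : (b.1 - a.1) ^ 2 + (b.2 - a.2) ^ 2 ≠ 0 := by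
    intro hd
    exact hab (Prod.ext (by nlinarith) (by nlinarith))
  -- the coefficient of `p` on the line is the projection of `p - a` onto `b - a`
  have hp : AffineMap.lineMap a b
      (((b.1 - a.1) * (p.1 - a.1) + (b.2 - a.2) * (p.2 - a.2)) /
        ((b.1 - a.1) ^ 2 + (b.2 - a.2) ^ 2)) = p := by
    unfold det3 at h
    rw [AffineMap.lineMap_apply_module]
    ext <;> simp only [Prod.fst_add, Prod.snd_add, Prod.smul_fst, Prod.smul_snd, smul_eq_mul] <;>
      field_simp
    · linear_combination (b.2 - a.2) * h
    · linear_combination -(b.1 - a.1) * h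
  rw [Set.pair_comm, Set.insert_comm, ← hp]
  exact collinear_insert_of_mem_affineSpan_pair (AffineMap.lineMap_mem_affineSpan_pair _ a b)

theorem exists_mem_segment_det3_eq_zero {a b x y : Pt} (h : det3 a b x * det3 a b y ≤ 0) :
    ∃ z ∈ segment ℝ x y, det3 a b z = 0 := by
  have hs := (convex_segment x y).isPreconnected
  have hc := (continuous_det3 a b).continuousOn (s := segment ℝ x y)
  rcases mul_nonpos_iff.mp h with ⟨hx, hy⟩ | ⟨hx, hy⟩
  · exact hs.intermediate_value (right_mem_segment ℝ x y) (left_mem_segment ℝ x y) hc ⟨hy, hx⟩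
  · exact hs.intermediate_value (left_mem_segment ℝ x y) (right_mem_segment ℝ x y) hc ⟨hx, hy⟩

theorem mem_edgeList_iff {l : List Pt} {x y : Pt} :
    (x, y) ∈ edgeList l ↔ ∃ L R, l = L ++ x :: y :: R := by
  induction l with
  | nil => simp [edgeList]
  | cons p t ih =>
    cases t with
    | nil =>
      simp only [edgeList, List.tail_cons, List.zip_nil_right, List.not_mem_nil, false_iff]
      rintro ⟨L, R, h⟩
      have := congrArg List.length h
      simp only [List.length_cons, List.length_nil, List.length_append] at this
      omega
    | cons q t =>
      simp only [edgeList, List.tail_cons, List.zip_cons_cons, List.mem_cons, Prod.mk.injEq] at ih ⊢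
      rw [ih]
      constructor
      · rintro (⟨rfl, rfl⟩ | ⟨L, R, h⟩)
        · exact ⟨[], t, rfl⟩
        · exact ⟨p :: L, R, by rw [h]; rfl⟩
      · rintro ⟨_ | ⟨r, L⟩, R, h⟩
        · simp_all
        · exact Or.inr ⟨L, R, (List.cons_eq_cons.mp h).2⟩

theorem mem_of_mem_edgeList {l : List Pt} {x y : Pt} (h : (x, y) ∈ edgeList l) :
    x ∈ l ∧ y ∈ l :=
  ⟨(List.of_mem_zip h).1, List.mem_of_mem_tail (List.of_mem_zip h).2⟩

theorem mem_edgeList_of_isInfix {M l : List Pt} (hM : M <:+: l) {x y : Pt}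
    (h : (x, y) ∈ edgeList M) : (x, y) ∈ edgeList l := by
  obtain ⟨s, t, rfl⟩ := hM
  obtain ⟨L, R, rfl⟩ := mem_edgeList_iff.mp h
  exact mem_edgeList_iff.mpr ⟨s ++ L, R ++ t, by simp⟩

theorem isChain_of_forall_mem_edgeList {r : Pt → Pt → Prop} {l : List Pt}
    (h : ∀ x y, (x, y) ∈ edgeList l → r x y) : l.IsChain r :=
  List.isChain_iff_forall_rel_of_append_cons_cons.mpr fun x y L R hl =>
    h x y (mem_edgeList_iff.mpr ⟨L, R, hl⟩)

theorem SharesExactly.symm {a b : Pt} {l₁ l₂ : List Pt} (h : SharesExactly a b l₁ l₂) :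
    SharesExactly b a l₁ l₂ :=
  ⟨h.1.symm, h.2.1.symm, fun x y h₁ h₂ => (h.2.2 x y h₁ h₂).trans (Set.pair_comm a b)⟩

theorem PlanePath.eq_or_eq_of_mem_segment {S : Finset Pt} {l : List Pt} {a b x y z : Pt}
    (hpl : PlanePath S l) (hedge : IsEdgeOf a b l) (hxy : (x, y) ∈ edgeList l)
    (hxa : x ≠ a) (hxb : x ≠ b) (hzxy : z ∈ segment ℝ x y) (hzab : z ∈ segment ℝ a b) :
    z = x ∨ z = y := by
  rcases hedge with h | h
  · exact hpl.2.2 _ hxy _ h (by simp [hxa]) ⟨hzxy, hzab⟩ |>.1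
  · exact hpl.2.2 _ hxy _ h (by simp [hxb]) ⟨hzxy, segment_symm ℝ a b ▸ hzab⟩ |>.1

theorem det3_mul_pos_of_mem_edgeList {S : Finset Pt} {l : List Pt} {a b x y : Pt} (hab : a ≠ b)
    (hav : HullVertex S a) (hbv : HullVertex S b) (hpl : PlanePath S l) (hedge : IsEdgeOf a b l)
    (hxy : (x, y) ∈ edgeList l) (hx : det3 a b x ≠ 0) (hy : det3 a b y ≠ 0) :
    0 < det3 a b x * det3 a b y := by
  by_contra hxy'
  obtain ⟨z, hzxy, hz⟩ := exists_mem_segment_det3_eq_zero (not_lt.mp hxy')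
  have hS : ∀ p ∈ l, p ∈ convexHull ℝ (S : Set Pt) := fun p hp =>
    subset_convexHull ℝ _ (by simpa [← hpl.2.1] using hp)
  have hzS : z ∈ convexHull ℝ (S : Set Pt) := (convex_convexHull ℝ _).segment_subset
    (hS x (mem_of_mem_edgeList hxy).1) (hS y (mem_of_mem_edgeList hxy).2) hzxy
  have hzab := mem_segment_of_collinear_of_mem_extremePoints hab hav hbv hzS
    (collinear_of_det3_eq_zero hz)
  rcases hpl.eq_or_eq_of_mem_segment hedge hxy (by rintro rfl; simp at hx)
    (by rintro rfl; simp at hx) hzxy hzab with rfl | rfl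
  · exact hx hz
  · exact hy hz

theorem det3_ne_zero_of_genPos {S : Finset Pt} (hgp : GenPos S) {a b p : Pt} (ha : a ∈ S)
    (hb : b ∈ S) (hp : p ∈ S) (hab : a ≠ b) (hpa : p ≠ a) (hpb : p ≠ b) : det3 a b p ≠ 0 :=
  fun h => hgp a ha b hb p hp hab hpa.symm hpb.symm (collinear_of_det3_eq_zero h)

theorem exists_isInfix_of_isEdgeOf {l : List Pt} {a b : Pt} (hnd : l.Nodup)
    (hedge : IsEdgeOf a b l) :
    ∃ L R, L <:+: l ∧ R <:+: l ∧ ∀ p, p ∈ L ++ R ↔ p ∈ l ∧ p ≠ a ∧ p ≠ b := by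
  obtain ⟨u, v, huv, L, R, rfl⟩ :
      ∃ u v, (∀ p, p = u ∨ p = v ↔ p = a ∨ p = b) ∧ ∃ L R, l = L ++ u :: v :: R := by
    rcases hedge with h | h
    · exact ⟨a, b, fun p => Iff.rfl, mem_edgeList_iff.mp h⟩
    · exact ⟨b, a, fun p => or_comm, mem_edgeList_iff.mp h⟩
  refine ⟨L, R, List.infix_append [] L _, ⟨L ++ [u, v], [], by simp⟩, fun p => ?_⟩
  rw [List.nodup_middle, List.nodup_cons, List.nodup_middle, List.nodup_cons] at hnd
  rw [← not_or, ← huv]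
  simp only [List.mem_append, List.mem_cons] at hnd ⊢
  constructor
  · intro hp
    refine ⟨by tauto, ?_⟩
    rintro (rfl | rfl) <;> tauto
  · tauto

theorem forall_pos_det3_iff_of_isInfix {S : Finset Pt} {l M : List Pt} {a b : Pt} (hab : a ≠ b)
    (hav : HullVertex S a) (hbv : HullVertex S b) (hpl : PlanePath S l) (hedge : IsEdgeOf a b l)
    (hM : M <:+: l) (hMdet : ∀ p ∈ M, det3 a b p ≠ 0) :
    ∀ x ∈ M, ∀ y ∈ M, (0 < det3 a b x ↔ 0 < det3 a b y) :=
  List.forall_iff_of_isChain <| isChain_of_forall_mem_edgeList fun x y hxy =>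
    pos_iff_pos_of_mul_pos <| det3_mul_pos_of_mem_edgeList hab hav hbv hpl hedge
      (mem_edgeList_of_isInfix hM hxy) (hMdet x (mem_of_mem_edgeList hxy).1)
      (hMdet y (mem_of_mem_edgeList hxy).2)

theorem exists_isInfix_toFinset_eq_filter_pos {S : Finset Pt} {l : List Pt} {a b : Pt}
    (hgp : GenPos S) (ha : a ∈ S) (hb : b ∈ S) (hab : a ≠ b) (hav : HullVertex S a)
    (hbv : HullVertex S b) (hpl : PlanePath S l) (hedge : IsEdgeOf a b l)
    (hpos : ∃ p ∈ S, 0 < det3 a b p) (hneg : ∃ p ∈ S, det3 a b p < 0) :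
    ∃ M, M <:+: l ∧ M.toFinset = S.filter (0 < det3 a b ·) := by
  have hmem : ∀ p, p ∈ l ↔ p ∈ S := fun p => by rw [← hpl.2.1, List.mem_toFinset]
  obtain ⟨L, R, hL, hR, hLR⟩ := exists_isInfix_of_isEdgeOf hpl.1 hedge
  have hdet : ∀ p ∈ L ++ R, det3 a b p ≠ 0 := fun p hp => by
    obtain ⟨hp, hpa, hpb⟩ := (hLR p).mp hp
    exact det3_ne_zero_of_genPos hgp ha hb ((hmem p).mp hp) hab hpa hpb
  have hoff : ∀ p ∈ S, det3 a b p ≠ 0 → p ∈ L ++ R := fun p hp hp0 =>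
    (hLR p).mpr ⟨(hmem p).mpr hp, by rintro rfl; simp at hp0, by rintro rfl; simp at hp0⟩
  have hfilter : ((L ++ R).filter (0 < det3 a b ·)).toFinset = S.filter (0 < det3 a b ·) := by
    ext p
    simp only [List.mem_toFinset, List.mem_filter, Finset.mem_filter, decide_eq_true_eq]
    exact ⟨fun h => ⟨(hmem p).mp ((hLR p).mp h.1).1, h.2⟩, fun h => ⟨hoff p h.1 h.2.ne', h.2⟩⟩
  obtain ⟨p, hpS, hp⟩ := hpos
  obtain ⟨q, hqS, hq⟩ := hneg
  rcases List.filter_append_eq_left_or_right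
      (forall_pos_det3_iff_of_isInfix hab hav hbv hpl hedge hL fun p hp =>
        hdet p (List.mem_append_left R hp))
      (forall_pos_det3_iff_of_isInfix hab hav hbv hpl hedge hR fun p hp =>
        hdet p (List.mem_append_right L hp))
      ⟨p, hoff p hpS hp.ne', hp⟩ ⟨q, hoff q hqS hq.ne, hq.not_gt⟩ with h | h
  · exact ⟨L, hL, h ▸ hfilter⟩
  · exact ⟨R, hR, h ▸ hfilter⟩

theorem isEdgeOf_of_isInfix {M l : List Pt} {c d : Pt} (hM : M <:+: l) (hnd : M.Nodup)
    (hcd : c ≠ d) (hMcd : M.toFinset = {c, d}) : IsEdgeOf c d l := by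
  have hlen : M.length = 2 := by
    rw [← List.toFinset_card_of_nodup hnd, hMcd, Finset.card_pair hcd]
  obtain ⟨x, y, rfl⟩ := List.length_eq_two.mp hlen
  have hxy : (x, y) ∈ edgeList l := mem_edgeList_of_isInfix hM (by simp [edgeList])
  have hc : c = x ∨ c = y := by simpa using congrArg (c ∈ ·) hMcd
  have hd : d = x ∨ d = y := by simpa using congrArg (d ∈ ·) hMcd
  rcases hc with rfl | rfl <;> rcases hd with rfl | rfl
  · exact absurd rfl hcd
  · exact .inl hxy
  · exact .inr hxy
  · exact absurd rfl hcd

theorem not_sharesExactly_of_card_filter_pos_eq_two {S : Finset Pt} {l₁ l₂ : List Pt} {a b : Pt}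
    (hgp : GenPos S) (ha : a ∈ S) (hb : b ∈ S) (hab : a ≠ b) (hav : HullVertex S a)
    (hbv : HullVertex S b) (hpos : (S.filter (0 < det3 a b ·)).card = 2)
    (hneg : 1 ≤ (S.filter (det3 a b · < 0)).card) (hpl₁ : PlanePath S l₁)
    (hpl₂ : PlanePath S l₂) : ¬ SharesExactly a b l₁ l₂ := by
  intro hsh
  obtain ⟨c, d, hcd, hScd⟩ := Finset.card_eq_two.mp hpos
  have hc : c ∈ S.filter (0 < det3 a b ·) := hScd ▸ Finset.mem_insert_self c {d}
  have hedge : ∀ l, PlanePath S l → IsEdgeOf a b l → IsEdgeOf c d l := by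
    intro l hpl hedge
    obtain ⟨M, hM, hMS⟩ := exists_isInfix_toFinset_eq_filter_pos hgp ha hb hab hav hbv hpl hedge
      (Finset.filter_nonempty_iff.mp (Finset.card_pos.mp (hpos ▸ two_pos)))
      (Finset.filter_nonempty_iff.mp (Finset.card_pos.mp hneg))
    exact isEdgeOf_of_isInfix hM (hpl.1.sublist hM.sublist) hcd (hMS.trans hScd)
  have hcab : c ∈ ({a, b} : Set Pt) :=
    hsh.2.2 c d (hedge l₁ hpl₁ hsh.1) (hedge l₂ hpl₂ hsh.2.1) ▸ Set.mem_insert c {d}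
  rcases hcab with rfl | rfl <;> simp at hc

/-- If `a, b` are hull vertices such that one open halfplane of `ℓ(ab)`
contains exactly 2 points of `S` and the other at least 1, then no two plane Hamiltonian
paths on `S` share exactly the edge `ab`. -/
theorem stmt_9 (S : Finset Pt) (hgp : GenPos S)
    (a b : Pt) (ha : a ∈ S) (hb : b ∈ S) (hab : a ≠ b)
    (hav : HullVertex S a) (hbv : HullVertex S b)
    (hcount :
      ((S.filter (fun p => 0 < det3 a b p)).card = 2 ∧
        1 ≤ (S.filter (fun p => det3 a b p < 0)).card) ∨
      ((S.filter (fun p => det3 a b p < 0)).card = 2 ∧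
        1 ≤ (S.filter (fun p => 0 < det3 a b p)).card)) :
    ¬ ∃ l₁ l₂ : List Pt, PlanePath S l₁ ∧ PlanePath S l₂ ∧ SharesExactly a b l₁ l₂ := by
  rintro ⟨l₁, l₂, hpl₁, hpl₂, hsh⟩
  rcases hcount with ⟨hpos, hneg⟩ | ⟨hneg, hpos⟩
  · exact not_sharesExactly_of_card_filter_pos_eq_two hgp ha hb hab hav hbv hpos hneg hpl₁ hpl₂ hsh
  · refine not_sharesExactly_of_card_filter_pos_eq_two hgp hb ha hab.symm hbv hav ?_ ?_ hpl₁ hpl₂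
      hsh.symm <;> simpa only [det3_swap a b, neg_pos, neg_lt_zero]
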